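/- Let R be a right noetherian ring such that the class of all C1 right R-modules is preenveloping. Then the class of all C1 right R-modules is closed under arbitrary direct sums. -/

import Mathlib

universe u v

open CategoryTheory

section ModuleDefs

variable (R : Type u) [Ring R]

/-- `N` is an essential submodule of `D` (inside the ambient module `M`). -/
def IsEssentialIn {M : Type v} [AddCommGroup M] [Module R M] (N D : Submodule R M) : Prop :=
  N ≤ D ∧ ∀ K : Submodule R M, K ≤ D → K ≠ ⊥ → N ⊓ K ≠ ⊥

/-- `N` is a direct summand of the ambient module. -/
def IsSummand {M : Type v} [AddCommGroup M] [Module R M] (N : Submodule R M) : Prop :=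
  ∃ N' : Submodule R M, IsCompl N N'

/-- C1 (extending) module: every submodule is essential in a direct summand. -/
def IsC1Module (M : Type v) [AddCommGroup M] [Module R M] : Prop :=
  ∀ N : Submodule R M, ∃ D : Submodule R M, IsSummand R D ∧ IsEssentialIn R N D

/-- C2 module: every submodule isomorphic to a direct summand is a direct summand. -/
def IsC2Module (M : Type v) [AddCommGroup M] [Module R M] : Prop :=
  ∀ A B : Submodule R M, IsSummand R B → Nonempty (A ≃ₗ[R] B) → IsSummand R A

/-- C3 module: the sum of two direct summands intersecting trivially is a direct summand. -/
def IsC3Module (M : Type v) [AddCommGroup M] [Module R M] : Prop :=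
  ∀ A B : Submodule R M, IsSummand R A → IsSummand R B → A ⊓ B = ⊥ → IsSummand R (A ⊔ B)

/-- Quasi-continuous module: C1 and C3. -/
def IsQuasiContinuousModule (M : Type v) [AddCommGroup M] [Module R M] : Prop :=
  IsC1Module R M ∧ IsC3Module R M

/-- Continuous module: C1 and C2. -/
def IsContinuousModule (M : Type v) [AddCommGroup M] [Module R M] : Prop :=
  IsC1Module R M ∧ IsC2Module R M

/-- Quasi-injective module: every homomorphism from a submodule into the module
extends to an endomorphism. -/
def IsQuasiInjectiveModule (M : Type v) [AddCommGroup M] [Module R M] : Prop :=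
  ∀ (N : Submodule R M) (f : N →ₗ[R] M), ∃ g : M →ₗ[R] M, ∀ x : N, g x = f x

end ModuleDefs

section ApproxDefs

variable (R : Type u) [Ring R]

/-- `g : M ⟶ E` is a `C`-preenvelope of `M`. -/
def IsPreenvelope (C : ModuleCat.{u} R → Prop) {M E : ModuleCat.{u} R} (g : M ⟶ E) : Prop :=
  C E ∧ ∀ E' : ModuleCat.{u} R, C E' → ∀ g' : M ⟶ E', ∃ α : E ⟶ E', g ≫ α = g'

/-- A preenveloping class. -/
def Preenveloping (C : ModuleCat.{u} R → Prop) : Prop :=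
  ∀ M : ModuleCat.{u} R, ∃ (E : ModuleCat.{u} R) (g : M ⟶ E), IsPreenvelope R C g

/-- `g : M ⟶ E` is a `C`-envelope of `M`. -/
def IsEnvelope (C : ModuleCat.{u} R → Prop) {M E : ModuleCat.{u} R} (g : M ⟶ E) : Prop :=
  IsPreenvelope R C g ∧ ∀ α : E ⟶ E, g ≫ α = g → IsIso α

/-- An enveloping class. -/
def Enveloping (C : ModuleCat.{u} R → Prop) : Prop :=
  ∀ M : ModuleCat.{u} R, ∃ (E : ModuleCat.{u} R) (g : M ⟶ E), IsEnvelope R C g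

/-- `g : X ⟶ M` is a `C`-precover of `M`. -/
def IsPrecover (C : ModuleCat.{u} R → Prop) {X M : ModuleCat.{u} R} (g : X ⟶ M) : Prop :=
  C X ∧ ∀ X' : ModuleCat.{u} R, C X' → ∀ g' : X' ⟶ M, ∃ α : X' ⟶ X, α ≫ g = g'

/-- A precovering class. -/
def Precovering (C : ModuleCat.{u} R → Prop) : Prop :=
  ∀ M : ModuleCat.{u} R, ∃ (X : ModuleCat.{u} R) (g : X ⟶ M), IsPrecover R C g

/-- `C` is closed under finite direct sums. -/
def ClosedUnderFiniteDirectSums (C : ModuleCat.{u} R → Prop) : Prop :=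
  ∀ (n : ℕ) (M : Fin n → ModuleCat.{u} R), (∀ i, C (M i)) →
    C (ModuleCat.of R (∀ i, M i))

/-- `C` is closed under isomorphisms. -/
def ClosedUnderIso (C : ModuleCat.{u} R → Prop) : Prop :=
  ∀ M N : ModuleCat.{u} R, (M ≅ N) → C M → C N

/-- `C` is closed under direct summands. -/
def ClosedUnderSummands (C : ModuleCat.{u} R → Prop) : Prop :=
  ∀ (M : ModuleCat.{u} R) (N : Submodule R M), IsSummand R N → C M → C (ModuleCat.of R N)

end ApproxDefs
section ExtraDefs

variable (R : Type u) [Ring R]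

/-- A uniform module: nonzero, and every nonzero submodule is essential. -/
def IsUniformModule (M : Type v) [AddCommGroup M] [Module R M] : Prop :=
  Nontrivial M ∧ ∀ N : Submodule R M, N ≠ ⊥ → IsEssentialIn R N (⊤ : Submodule R M)

/-- A module of composition length exactly `2`. -/
def HasCompositionLength2 (M : Type v) [AddCommGroup M] [Module R M] : Prop :=
  ∃ N : Submodule R M, IsSimpleModule R N ∧ IsSimpleModule R (M ⧸ N)

/-- A module of composition length at most `2`. -/
def CompositionLengthLE2 (M : Type v) [AddCommGroup M] [Module R M] : Prop :=
  ∃ N : Submodule R M, (IsSimpleModule R N ∨ N = ⊥) ∧ (IsSimpleModule R (M ⧸ N) ∨ N = ⊤)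

end ExtraDefs


/-!
A C1-preenvelope `g : ∏ Mᵢ → E` is a split monomorphism, since every projection `∏ Mᵢ → Mᵢ`
factors through it; so `∏ Mᵢ` is isomorphic to a direct summand of the C1 module `E`, hence is C1.
Over a noetherian ring, `⨁ Mᵢ` has no proper essential extension inside `∏ Mᵢ`: for `t` in such an
extension, the left annihilators of the tails of `t` stabilise, and the tail of `t` beyond that point
generates a submodule meeting `⨁ Mᵢ` trivially, so it vanishes. A submodule without proper
essential extensions in a C1 module is a summand, so `⨁ Mᵢ` is a summand of `∏ Mᵢ`, hence C1.

Essentiality and the C1 condition only involve the submodule lattice, so the facts that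
isomorphic copies and direct summands of C1 modules are again C1 hold for any modular, compactly
generated lattice.
-/

section Lattice

variable {α β : Type*}

section Basic

variable [Lattice α] [OrderBot α]

def IsEssentialLE (a b : α) : Prop :=
  a ≤ b ∧ ∀ c ≤ b, c ≠ ⊥ → a ⊓ c ≠ ⊥

/-- `a` has no proper essential extension (a *closed* element, in module-theoretic terms). -/
def IsEssClosed (a : α) : Prop :=
  ∀ b, IsEssentialLE a b → b = a

variable {a b c : α}

theorem IsEssentialLE.refl (a : α) : IsEssentialLE a a :=
  ⟨le_rfl, fun c hc hc0 => by rwa [inf_eq_right.mpr hc]⟩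

theorem IsEssentialLE.trans (hab : IsEssentialLE a b) (hbc : IsEssentialLE b c) :
    IsEssentialLE a c := by
  refine ⟨hab.1.trans hbc.1, fun d hd hd0 => ?_⟩
  have := hab.2 (b ⊓ d) inf_le_left (hbc.2 d hd hd0)
  rwa [← inf_assoc, inf_eq_left.mpr hab.1] at this

theorem IsEssentialLE.eq_bot_of_inf_eq_bot (h : IsEssentialLE a b) (hcb : c ≤ b)
    (hac : a ⊓ c = ⊥) : c = ⊥ := by
  by_contra hc0
  exact h.2 c hcb hc0 hac

theorem IsEssentialLE.map_orderIso [Lattice β] [OrderBot β] (e : α ≃o β)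
    (h : IsEssentialLE a b) : IsEssentialLE (e a) (e b) := by
  refine ⟨e.monotone h.1, fun c hc hc0 => ?_⟩
  rw [← e.apply_symm_apply c, ← e.map_inf, Ne, ← e.map_bot, e.apply_eq_iff_eq]
  exact h.2 _ (e.symm_apply_le.mpr hc) (by rwa [Ne, ← e.symm.map_bot, e.symm.apply_eq_iff_eq])

end Basic

section Extending

variable [Lattice α] [BoundedOrder α] {a : α}

variable (α) in
def IsExtendingLattice : Prop :=
  ∀ a : α, ∃ d, IsComplemented d ∧ IsEssentialLE a d

theorem IsExtendingLattice.isComplemented_of_isEssClosed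
    (h : IsExtendingLattice α) (ha : IsEssClosed a) : IsComplemented a := by
  obtain ⟨d, hd, had⟩ := h a
  rwa [← ha d had]

theorem IsExtendingLattice.of_orderIso [Lattice β] [BoundedOrder β]
    (e : α ≃o β) (h : IsExtendingLattice α) : IsExtendingLattice β := by
  intro b
  obtain ⟨d, ⟨d', hdd'⟩, hbd⟩ := h (e.symm b)
  exact ⟨e d, ⟨e d', e.isCompl_iff.mp hdd'⟩, by simpa using hbd.map_orderIso e⟩

end Extending

section Closure

variable [CompleteLattice α] [IsCompactlyGenerated α] {a s : α}

theorem IsEssentialLE.sSup_of_isChain {c : Set α} (hc : IsChain (· ≤ ·) c) {x : α} (hx : x ∈ c)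
    (h : ∀ y ∈ c, IsEssentialLE a y) : IsEssentialLE a (sSup c) := by
  refine ⟨(h x hx).1.trans (le_sSup hx), fun k hk hk0 => ?_⟩
  have hk : k = ⨆ y ∈ c, k ⊓ y := by
    rw [← hc.directedOn.inf_sSup_eq, inf_eq_left.mpr hk]
  obtain ⟨y, hy, hky⟩ : ∃ y ∈ c, k ⊓ y ≠ ⊥ := by
    by_contra! hbot
    exact hk0 (hk.trans (iSup₂_eq_bot.mpr hbot))
  intro hak
  refine (h y hy).2 (k ⊓ y) inf_le_right hky (eq_bot_iff.mpr ?_)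
  exact hak ▸ inf_le_inf_left a inf_le_left

theorem exists_isEssentialLE_maximal_le (has : a ≤ s) :
    ∃ k ≤ s, IsEssentialLE a k ∧ ∀ b ≤ s, IsEssentialLE k b → b = k := by
  obtain ⟨k, -, ⟨hks, hak⟩, hmax⟩ := zorn_le_nonempty₀ {x | x ≤ s ∧ IsEssentialLE a x}
    (fun c hcS hc y hy => ⟨sSup c, ⟨sSup_le fun x hx => (hcS hx).1,
      IsEssentialLE.sSup_of_isChain hc hy fun x hx => (hcS hx).2⟩, fun _ => le_sSup⟩)
    a ⟨has, .refl a⟩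
  exact ⟨k, hks, hak, fun b hbs hkb => (hmax ⟨hbs, hak.trans hkb⟩ hkb.1).antisymm hkb.1⟩

end Closure

section Modular

variable [Lattice α] [BoundedOrder α] [IsModularLattice α] {s c k x : α}

/-- `(x ⊔ c) ⊓ s` is the projection of `x` to `s` along `c`. -/
theorem IsEssentialLE.sup_inf_of_isCompl (hsc : IsCompl s c) (hks : k ≤ s)
    (h : IsEssentialLE k x) : IsEssentialLE k ((x ⊔ c) ⊓ s) := by
  refine ⟨le_inf (h.1.trans le_sup_left) hks, fun l hl hl0 => ?_⟩
  have hls : l ≤ s := hl.trans inf_le_right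
  have hcl : (c ⊔ x) ⊓ (c ⊔ l) = c ⊔ x ⊓ (c ⊔ l) := sup_inf_assoc_of_le x le_sup_left
  rw [inf_eq_right.mpr (sup_le le_sup_left (sup_comm x c ▸ hl.trans inf_le_left))] at hcl
  have hxl : x ⊓ (c ⊔ l) ≠ ⊥ := by
    intro hbot
    rw [hbot, sup_bot_eq, sup_eq_left] at hcl
    exact hl0 (le_bot_iff.mp (hsc.disjoint hls hcl))
  have hl' : (c ⊔ l) ⊓ s = l := by
    rw [sup_comm, sup_inf_assoc_of_le c hls, hsc.symm.inf_eq_bot, sup_bot_eq]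
  intro hkl
  refine h.2 _ inf_le_left hxl (eq_bot_iff.mpr ?_)
  calc k ⊓ (x ⊓ (c ⊔ l)) ≤ k ⊓ ((c ⊔ l) ⊓ s) :=
        le_inf inf_le_left (le_inf (inf_le_right.trans inf_le_right) (inf_le_left.trans hks))
    _ = ⊥ := by rw [hl', hkl]

theorem IsEssentialLE.eq_of_isCompl (hsc : IsCompl s c) (hks : k ≤ s)
    (hk : ∀ b ≤ s, IsEssentialLE k b → b = k) (h : IsEssentialLE k x) : x = k := by
  have hxc : x ⊓ c = ⊥ := h.eq_bot_of_inf_eq_bot inf_le_left <| eq_bot_iff.mpr <|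
    (inf_le_inf hks inf_le_right).trans hsc.disjoint.le_bot
  have hproj : (x ⊔ c) ⊓ s = k := hk _ inf_le_right (h.sup_inf_of_isCompl hsc hks)
  have hx : x ≤ k ⊔ c := calc
    x ≤ (c ⊔ s) ⊓ (x ⊔ c) := le_inf (by rw [hsc.symm.sup_eq_top]; exact le_top) le_sup_left
    _ = k ⊔ c := by rw [sup_inf_assoc_of_le s le_sup_right, inf_comm, hproj, sup_comm]
  rw [← inf_eq_left.mpr hx, inf_comm, sup_inf_assoc_of_le c h.1, inf_comm c, hxc, sup_bot_eq]

end Modular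

theorem IsExtendingLattice.Iic [CompleteLattice α] [IsCompactlyGenerated α] [IsModularLattice α]
    (h : IsExtendingLattice α) {s c : α} (hsc : IsCompl s c) : IsExtendingLattice (Set.Iic s) := by
  intro a
  obtain ⟨k, hks, hak, hk⟩ := exists_isEssentialLE_maximal_le a.2
  obtain ⟨d, hd⟩ := h.isComplemented_of_isEssClosed fun x hkx => hkx.eq_of_isCompl hsc hks hk
  refine ⟨⟨k, hks⟩, ⟨⟨d ⊓ s, inf_le_right⟩, ?_⟩, hak.1, fun l hl hl0 hal => ?_⟩
  · rw [Set.Iic.isCompl_iff]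
    exact ⟨hd.disjoint.mono_right inf_le_left,
      by rw [← sup_inf_assoc_of_le d hks, hd.sup_eq_top, top_inf_eq]⟩
  · exact hak.2 l hl (fun h0 => hl0 (Subtype.ext h0)) (congrArg Subtype.val hal)

end Lattice

section Module

variable {R : Type u} [Ring R] {M N : Type v} [AddCommGroup M] [Module R M]
  [AddCommGroup N] [Module R N]

/- `IsC1Module R M` is definitionally `IsExtendingLattice (Submodule R M)`. -/

theorem IsC1Module.of_linearEquiv (e : M ≃ₗ[R] N) (h : IsC1Module R M) : IsC1Module R N :=
  IsExtendingLattice.of_orderIso (Submodule.orderIsoMapComap e) h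

theorem IsC1Module.of_isCompl (h : IsC1Module R M) {S C : Submodule R M} (hSC : IsCompl S C) :
    IsC1Module R S :=
  (IsExtendingLattice.Iic h hSC).of_orderIso S.mapIic.symm

theorem IsC1Module.isSummand_of_isEssClosed (h : IsC1Module R M) {S : Submodule R M}
    (hS : IsEssClosed S) : IsSummand R S :=
  IsExtendingLattice.isComplemented_of_isEssClosed h hS

theorem LinearMap.isCompl_range_ker_of_comp_eq_id {f : M →ₗ[R] N} {g : N →ₗ[R] M}
    (h : g ∘ₗ f = LinearMap.id) : IsCompl (LinearMap.range f) (LinearMap.ker g) := by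
  have hidem : IsIdempotentElem (f ∘ₗ g) := by
    change (f ∘ₗ g) ∘ₗ (f ∘ₗ g) = f ∘ₗ g
    rw [LinearMap.comp_assoc, ← LinearMap.comp_assoc g f g, h, LinearMap.id_comp]
  have hg : LinearMap.range g = ⊤ :=
    LinearMap.range_eq_top.mpr fun m => ⟨f m, LinearMap.congr_fun h m⟩
  have := LinearMap.IsIdempotentElem.isCompl hidem
  rwa [LinearMap.range_comp_of_range_eq_top f hg,
    LinearMap.ker_comp_of_ker_eq_bot g (LinearMap.ker_eq_bot_of_inverse h)] at this

end Module

section DirectSumInProduct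

open DirectSum

variable {R : Type u} [Ring R] {ι : Type*} {β : ι → Type*} [∀ i, AddCommGroup (β i)]
  [∀ i, Module R (β i)]

theorem DirectSum.mem_range_coeFnLinearMap_iff (y : ∀ i, β i) :
    y ∈ LinearMap.range (coeFnLinearMap R (M := β)) ↔ ∃ G : Finset ι, ∀ i ∉ G, y i = 0 := by
  classical
  constructor
  · rintro ⟨x, rfl⟩
    exact ⟨x.support, fun i hi => DFinsupp.notMem_support_iff.mp hi⟩
  · rintro ⟨G, hG⟩
    refine ⟨DFinsupp.mk G fun i => y i, funext fun i => ?_⟩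
    by_cases hi : i ∈ G
    · simp [coeFnLinearMap_apply, hi]
    · simp [coeFnLinearMap_apply, hi, hG i hi]

theorem exists_finset_forall_smul_eq_zero [IsNoetherianRing R] (t : ∀ i, β i) :
    ∃ G₀ : Finset ι, ∀ (r : R) (G : Finset ι), (∀ i ∉ G, r • t i = 0) → ∀ i ∉ G₀, r • t i = 0 := by
  classical
  let ann (G : Finset ι) : Submodule R R :=
    (Submodule.pi (↑G)ᶜ fun _ => ⊥).comap (LinearMap.toSpanSingleton R _ t)
  have mem_ann (G : Finset ι) (r : R) : r ∈ ann G ↔ ∀ i ∉ G, r • t i = 0 := by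
    simp [ann, Submodule.mem_pi]
  have ann_mono {G G' : Finset ι} (h : G ⊆ G') : ann G ≤ ann G' := fun r hr => by
    rw [mem_ann] at hr ⊢
    exact fun i hi => hr i fun hiG => hi (h hiG)
  obtain ⟨_, ⟨G₀, rfl⟩, hmax⟩ :=
    set_has_maximal_iff_noetherian.mpr inferInstance (Set.range ann) (Set.range_nonempty ann)
  refine ⟨G₀, fun r G hr => (mem_ann G₀ r).mp ?_⟩
  have hstable : ann (G₀ ∪ G) = ann G₀ :=
    ((ann_mono Finset.subset_union_left).lt_or_eq.resolve_left (hmax _ ⟨_, rfl⟩)).symm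
  exact hstable ▸ ann_mono Finset.subset_union_right ((mem_ann G r).mpr hr)

theorem DirectSum.isEssClosed_range_coeFnLinearMap [IsNoetherianRing R] :
    IsEssClosed (LinearMap.range (coeFnLinearMap R (M := β))) := by
  classical
  set S := LinearMap.range (coeFnLinearMap R (M := β))
  intro X hSX
  refine le_antisymm (fun t ht => ?_) hSX.1
  obtain ⟨G₀, hG₀⟩ := exists_finset_forall_smul_eq_zero (R := R) t
  let head : ∀ i, β i := fun i => if i ∈ G₀ then t i else 0
  have head_mem : head ∈ S := (mem_range_coeFnLinearMap_iff head).mpr ⟨G₀, fun i hi => if_neg hi⟩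
  suffices htail : t - head = 0 by rwa [sub_eq_zero.mp htail]
  have hdisj : S ⊓ Submodule.span R {t - head} = ⊥ := by
    refine eq_bot_iff.mpr fun z ⟨hzS, hz⟩ => ?_
    obtain ⟨r, rfl⟩ := Submodule.mem_span_singleton.mp hz
    have hrt : r • t ∈ S := by simpa [smul_sub] using S.add_mem hzS (S.smul_mem r head_mem)
    obtain ⟨G, hG⟩ := (mem_range_coeFnLinearMap_iff _).mp hrt
    have hrG₀ := hG₀ r G hG
    refine (Submodule.mem_bot R).mpr (funext fun i => ?_)
    by_cases hi : i ∈ G₀ <;> simp [head, hi, hrG₀ i]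
  simpa using hSX.eq_bot_of_inf_eq_bot
    ((Submodule.span_singleton_le_iff_mem _ _).mpr (X.sub_mem ht (hSX.1 head_mem))) hdisj

end DirectSumInProduct

theorem IsC1Module.pi_of_preenveloping {R : Type u} [Ring R]
    (h : Preenveloping R (fun M : ModuleCat.{u} R => IsC1Module R M)) {ι : Type u}
    (M : ι → ModuleCat.{u} R) (hM : ∀ i, IsC1Module R (M i)) : IsC1Module R (∀ i, M i) := by
  obtain ⟨E, g, hE, hfactor⟩ := h (ModuleCat.of R (∀ i, M i))
  choose p hp using fun i => hfactor (M i) (hM i) (ModuleCat.ofHom (LinearMap.proj i))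
  have hsplit : LinearMap.pi (fun i => (p i).hom) ∘ₗ g.hom = LinearMap.id := by
    ext x i
    exact congr($(hp i).hom x)
  exact (hE.of_isCompl (LinearMap.isCompl_range_ker_of_comp_eq_id hsplit)).of_linearEquiv
    (LinearEquiv.ofInjective g.hom
      (LinearMap.ker_eq_bot.mp (LinearMap.ker_eq_bot_of_inverse hsplit))).symm

open DirectSum in
theorem stmt_13 (R : Type u) [Ring R] [IsNoetherianRing R]
    (h : Preenveloping R (fun M : ModuleCat.{u} R => IsC1Module R M)) :
    ∀ (ι : Type u) (M : ι → ModuleCat.{u} R), (∀ i, IsC1Module R (M i)) →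
      IsC1Module R (⨁ i, M i) := by
  intro ι M hM
  have hprod := IsC1Module.pi_of_preenveloping h M hM
  obtain ⟨C, hC⟩ := hprod.isSummand_of_isEssClosed isEssClosed_range_coeFnLinearMap
  exact (hprod.of_isCompl hC).of_linearEquiv
    (LinearEquiv.ofInjective (coeFnLinearMap R) DFunLike.coe_injective).symm
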